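/- Let m > 0 and let T be the 2×2 complex matrix with rows (0, m) and (0, 1). Then the numerical range of T is the closed elliptical disk W(T) = { z ∈ ℂ : (Re(z) − 1/2)²/(1 + m²) + (Im(z))²/m² ≤ 1/4 }, i.e., the closed elliptical disk with foci 0 and 1, major semi-axis √(1 + m²)/2 and minor semi-axis m/2. -/

import Mathlib

/-- The numerical range of an `n × n` complex matrix `A`:
`W(A) = {⟨A x, x⟩ : x ∈ ℂⁿ, ‖x‖ = 1}`. -/
noncomputable def numRange {n : ℕ} (A : Matrix (Fin n) (Fin n) ℂ) : Set ℂ :=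
  {z : ℂ | ∃ x : EuclideanSpace ℂ (Fin n), ‖x‖ = 1 ∧
    z = (inner ℂ x (Matrix.toEuclideanLin A x) : ℂ)}

/-!
For a unit vector `x = (a, b)` one has `⟪x, T x⟫ = t + m · (conj a * b)` with `t = |b|²`, and
for fixed `t` the product `conj a * b` runs over the whole circle of radius `√(t (1 - t))`. Hence
`W(T)` is the union over real `t` of the circles `|z - t|² = m² t (1 - t)`. For fixed `z` this is a
quadratic equation in `t`, with a real root exactly when its discriminant
`m² (1 + m² - (2 Re z - 1)²) - 4 (1 + m²) (Im z)²` is nonnegative: the ellipse inequality.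
-/

open Complex ComplexConjugate

lemma EuclideanSpace.norm_eq_one_iff_fin_two (x : EuclideanSpace ℂ (Fin 2)) :
    ‖x‖ = 1 ↔ ‖x 0‖ ^ 2 + ‖x 1‖ ^ 2 = 1 := by
  rw [← pow_eq_one_iff_of_nonneg (norm_nonneg x) two_ne_zero, EuclideanSpace.norm_sq_eq,
    Fin.sum_univ_two]

lemma inner_toEuclideanLin_fin_two (A : Matrix (Fin 2) (Fin 2) ℂ)
    (x : EuclideanSpace ℂ (Fin 2)) :
    inner ℂ x (Matrix.toEuclideanLin A x) =
      conj (x 0) * (A 0 0 * x 0 + A 0 1 * x 1) + conj (x 1) * (A 1 0 * x 0 + A 1 1 * x 1) := by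
  simp only [EuclideanSpace.inner_eq_star_dotProduct, dotProduct, Matrix.ofLp_toLpLin,
    Matrix.toLin'_apply, Matrix.mulVec_fin_two, Pi.star_apply, RCLike.star_def, Fin.sum_univ_two,
    Matrix.cons_val_zero, Matrix.cons_val_one]
  ring

lemma mem_numRange_fin_two_iff (A : Matrix (Fin 2) (Fin 2) ℂ) (z : ℂ) :
    z ∈ numRange A ↔ ∃ a b : ℂ, ‖a‖ ^ 2 + ‖b‖ ^ 2 = 1 ∧
      z = conj a * (A 0 0 * a + A 0 1 * b) + conj b * (A 1 0 * a + A 1 1 * b) := by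
  constructor
  · rintro ⟨x, hx, rfl⟩
    exact ⟨x 0, x 1, (EuclideanSpace.norm_eq_one_iff_fin_two x).1 hx,
      inner_toEuclideanLin_fin_two A x⟩
  · rintro ⟨a, b, hab, rfl⟩
    exact ⟨!₂[a, b], (EuclideanSpace.norm_eq_one_iff_fin_two _).2 hab,
      (inner_toEuclideanLin_fin_two A !₂[a, b]).symm⟩

lemma exists_conj_mul_eq_iff (t : ℝ) (w : ℂ) :
    (∃ a b : ℂ, ‖a‖ ^ 2 + ‖b‖ ^ 2 = 1 ∧ ‖b‖ ^ 2 = t ∧ conj a * b = w) ↔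
      ‖w‖ ^ 2 = t * (1 - t) := by
  constructor
  · rintro ⟨a, b, hab, rfl, rfl⟩
    rw [norm_mul, norm_conj, mul_pow]
    linear_combination ‖b‖ ^ 2 * hab
  · intro hw
    have ht : 0 ≤ t ∧ t ≤ 1 := by
      constructor <;> nlinarith [sq_nonneg ‖w‖]
    -- polar form `w = ‖w‖ * exp (arg w * I)`, split as `‖w‖ = √(1 - t) * √t`
    set u := exp (arg w * I)
    have hu : ‖u‖ = 1 := norm_exp_ofReal_mul_I _
    refine ⟨conj (√(1 - t) * u), √t, ?_, ?_, ?_⟩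
    · simp [hu, Real.sq_sqrt ht.1, Real.sq_sqrt (sub_nonneg.2 ht.2)]
    · simp [Real.sq_sqrt ht.1]
    · have hw' : ‖w‖ = √(1 - t) * √t := by
        rw [← Real.sqrt_mul (sub_nonneg.2 ht.2), ← Real.sqrt_sq (norm_nonneg w), hw, mul_comm]
      rw [conj_conj, ← norm_mul_exp_arg_mul_I w, hw']
      push_cast
      ring

lemma exists_quadratic_eq_zero_iff_discrim_nonneg {a b c : ℝ} (ha : a ≠ 0) :
    (∃ x, a * (x * x) + b * x + c = 0) ↔ 0 ≤ discrim a b c := by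
  constructor
  · rintro ⟨x, hx⟩
    rw [discrim_eq_sq_of_quadratic_eq_zero hx]
    positivity
  · intro h
    exact exists_quadratic_eq_zero ha ⟨√(discrim a b c), (Real.mul_self_sqrt h).symm⟩

lemma numRange_upperTriangular_zero_one {c : ℂ} (hc : c ≠ 0) :
    numRange !![0, c; 0, 1] = {z : ℂ | ∃ t : ℝ, ‖z - t‖ ^ 2 = ‖c‖ ^ 2 * (t * (1 - t))} := by
  ext z
  simp only [mem_numRange_fin_two_iff, Set.mem_ofPred_eq, Matrix.of_apply, Matrix.cons_val',
    Matrix.cons_val_zero, Matrix.cons_val_one, Matrix.empty_val', Matrix.cons_val_fin_one,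
    zero_mul, zero_add, one_mul, conj_mul']
  constructor
  · rintro ⟨a, b, hab, rfl⟩
    refine ⟨‖b‖ ^ 2, ?_⟩
    have := (exists_conj_mul_eq_iff _ _).1 ⟨a, b, hab, rfl, rfl⟩
    push_cast
    rw [add_sub_cancel_right, ← mul_assoc, mul_comm _ c, mul_assoc, norm_mul, mul_pow, this]
  · rintro ⟨t, ht⟩
    obtain ⟨a, b, hab, rfl, hw⟩ := (exists_conj_mul_eq_iff t ((z - t) / c)).2 (by
      rw [norm_div, div_pow, ht, mul_div_cancel_left₀ _ (by simpa using hc)])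
    refine ⟨a, b, hab, ?_⟩
    rw [mul_left_comm, hw, mul_div_cancel₀ _ hc]
    push_cast
    ring

lemma ellipse_iff_discrim_nonneg {m : ℝ} (hm : 0 < m) (x y : ℝ) :
    (x - 1 / 2) ^ 2 / (1 + m ^ 2) + y ^ 2 / m ^ 2 ≤ 1 / 4 ↔
      0 ≤ discrim (1 + m ^ 2) (-(2 * x + m ^ 2)) (x ^ 2 + y ^ 2) := by
  rw [div_add_div _ _ (by positivity) (by positivity), div_le_div_iff₀ (by positivity) four_pos,
    discrim]
  constructor <;> intro h <;> linarith

/-- For `m > 0` and `T = [[0, m], [0, 1]]`, the numerical range `W(T)` is the closed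
elliptical disk `{ z : (Re z - 1/2)²/(1 + m²) + (Im z)²/m² ≤ 1/4 }`, i.e. the closed
elliptical disk with foci `0` and `1`, major semi-axis `√(1 + m²)/2` and minor
semi-axis `m/2`. -/
theorem numRange_elliptical_disk (m : ℝ) (hm : 0 < m) :
    numRange !![(0 : ℂ), (m : ℂ); 0, 1] =
      {z : ℂ | (z.re - 1 / 2) ^ 2 / (1 + m ^ 2) + z.im ^ 2 / m ^ 2 ≤ 1 / 4} := by
  rw [numRange_upperTriangular_zero_one (ofReal_ne_zero.2 hm.ne')]
  ext z
  rw [Set.mem_ofPred_eq, Set.mem_ofPred_eq, ellipse_iff_discrim_nonneg hm,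
    ← exists_quadratic_eq_zero_iff_discrim_nonneg (by positivity)]
  refine exists_congr fun t => ?_
  rw [← normSq_eq_norm_sq, normSq_apply, norm_real, Real.norm_eq_abs, sq_abs]
  simp only [sub_re, sub_im, ofReal_re, ofReal_im, sub_zero]
  constructor <;> intro h <;> linear_combination h
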